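/- arXiv:1801.10592 — 4 statements merged into one kernel-verified Lean document; each statement's English description precedes it below -/
import Mathlib

section
/- For every u ∈ (−1,1) and all ξ, x ∈ ℝ, the linearization of the stationary system maps the tangent vector t_2 = (∂_uθ_0, ∂_uψ_0) to −t_1 = −(∂_ξθ_0, ∂_ξψ_0): (i) u·∂_ξ(∂_uθ_0)(ξ,u,x) − ∂_uψ_0(ξ,u,x) + ∂_ξθ_0(ξ,u,x) = 0, and (ii) u·∂_ξ(∂_uψ_0)(ξ,u,x) − ∂_x²(∂_uθ_0)(ξ,u,x) + cos(θ_K(γ(u)(x−ξ)))·∂_uθ_0(ξ,u,x) + ∂_ξψ_0(ξ,u,x) = 0. -/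
noncomputable def θK (x : ℝ) : ℝ := 4 * Real.arctan (Real.exp x)

noncomputable def γ (u : ℝ) : ℝ := 1 / Real.sqrt (1 - u ^ 2)

noncomputable def θ₀ (ξ u x : ℝ) : ℝ := θK (γ u * (x - ξ))

noncomputable def ψ₀ (ξ u x : ℝ) : ℝ := -(u * γ u * deriv θK (γ u * (x - ξ)))

/-- `∂_u θ₀` of the soliton pair. -/
noncomputable def t₂θ (ξ u x : ℝ) : ℝ := deriv (fun u' => θ₀ ξ u' x) u

/-- `∂_u ψ₀` of the soliton pair. -/
noncomputable def t₂ψ (ξ u x : ℝ) : ℝ := deriv (fun u' => ψ₀ ξ u' x) u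

/-! The soliton is the Lorentz boost `z = γ(u)(x - ξ)` of a static profile `φ`, so every derivative
in the statement is a chain-rule multiple of `φ'`, `φ''` or `φ'''` at `z`, using `dγ/du = u γ³`.
Identity (i) then reduces to `γ² (1 - u²) = 1` for any twice differentiable profile; identity (ii)
needs in addition the differentiated pendulum equation `φ''' = cos φ · φ'`, which holds for the kink
because `θK' = 2 sin (θK / 2)` gives `θK'' = sin θK`. -/

open Real Set

lemma γ_sq_mul_one_sub_sq {u : ℝ} (hu : u ∈ Ioo (-1 : ℝ) 1) : γ u ^ 2 * (1 - u ^ 2) = 1 := by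
  have h : 0 < 1 - u ^ 2 := by nlinarith [hu.1, hu.2]
  rw [γ, div_pow, sq_sqrt h.le]
  field_simp

lemma hasDerivAt_γ {u : ℝ} (hu : u ∈ Ioo (-1 : ℝ) 1) : HasDerivAt γ (u * γ u ^ 3) u := by
  have h : 0 < 1 - u ^ 2 := by nlinarith [hu.1, hu.2]
  have hs : √(1 - u ^ 2) ≠ 0 := (sqrt_pos.mpr h).ne'
  have hsqrt : HasDerivAt (fun v => √(1 - v ^ 2)) (-(2 * u) / (2 * √(1 - u ^ 2))) u := by
    simpa using ((hasDerivAt_pow 2 u).const_sub 1).sqrt h.ne'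
  refine ((hasDerivAt_const u (1 : ℝ)).div hsqrt hs).congr_deriv ?_
  rw [show γ u = 1 / √(1 - u ^ 2) from rfl, ← sq_sqrt h.le]
  field_simp
  ring

lemma deriv_comp_mul_sub_left {F : ℝ → ℝ} {F' c x ξ : ℝ}
    (hF : HasDerivAt F F' (c * (x - ξ))) :
    deriv (fun ξ' => F (c * (x - ξ'))) ξ = -(c * F') :=
  ((hF.comp ξ (((hasDerivAt_id ξ).const_sub x).const_mul c)).congr_deriv (by ring)).deriv

lemma deriv_comp_mul_sub_right {F : ℝ → ℝ} {F' c x ξ : ℝ}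
    (hF : HasDerivAt F F' (c * (x - ξ))) :
    deriv (fun x' => F (c * (x' - ξ))) x = c * F' :=
  ((hF.comp x (((hasDerivAt_id x).sub_const ξ).const_mul c)).congr_deriv (by ring)).deriv

lemma hasDerivAt_comp_γ_mul {F : ℝ → ℝ} {F' u y : ℝ} (hu : u ∈ Ioo (-1 : ℝ) 1)
    (hF : HasDerivAt F F' (γ u * y)) :
    HasDerivAt (fun u' => F (γ u' * y)) (u * γ u ^ 3 * y * F') u :=
  (hF.comp u ((hasDerivAt_γ hu).mul_const y)).congr_deriv (by ring)

noncomputable def boostθ (φ : ℝ → ℝ) (ξ u x : ℝ) : ℝ := φ (γ u * (x - ξ))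

noncomputable def boostψ (φ : ℝ → ℝ) (ξ u x : ℝ) : ℝ := -(u * γ u * deriv φ (γ u * (x - ξ)))

-- In the names below, `position`, `velocity` and `space` refer to `∂_ξ`, `∂_u` and `∂_x`.
section Boost

variable {φ : ℝ → ℝ} {u : ℝ}

lemma deriv_boostθ_velocity (hu : u ∈ Ioo (-1 : ℝ) 1) (hφ : Differentiable ℝ φ) (ξ x : ℝ) :
    deriv (fun u' => boostθ φ ξ u' x) u =
      u * γ u ^ 2 * (γ u * (x - ξ) * deriv φ (γ u * (x - ξ))) :=
  ((hasDerivAt_comp_γ_mul hu (hφ _).hasDerivAt).congr_deriv (by ring)).deriv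

lemma deriv_boostψ_velocity (hu : u ∈ Ioo (-1 : ℝ) 1) (hφ' : Differentiable ℝ (deriv φ))
    (ξ x : ℝ) :
    deriv (fun u' => boostψ φ ξ u' x) u =
      -(γ u ^ 3 * (deriv φ (γ u * (x - ξ))
        + u ^ 2 * (γ u * (x - ξ) * deriv (deriv φ) (γ u * (x - ξ))))) := by
  refine (((((hasDerivAt_id u).mul (hasDerivAt_γ hu)).mul
    (hasDerivAt_comp_γ_mul hu (hφ' (γ u * (x - ξ))).hasDerivAt)).neg).congr_deriv ?_).deriv
  simp only [Pi.mul_apply, id]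
  linear_combination γ u * deriv φ (γ u * (x - ξ)) * γ_sq_mul_one_sub_sq hu

lemma deriv_boostθ_position (hφ : Differentiable ℝ φ) (ξ x : ℝ) :
    deriv (fun ξ' => boostθ φ ξ' u x) ξ = -(γ u * deriv φ (γ u * (x - ξ))) :=
  deriv_comp_mul_sub_left (hφ _).hasDerivAt

lemma deriv_boostψ_position (hφ' : Differentiable ℝ (deriv φ)) (ξ x : ℝ) :
    deriv (fun ξ' => boostψ φ ξ' u x) ξ = u * γ u ^ 2 * deriv (deriv φ) (γ u * (x - ξ)) := by
  unfold boostψ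
  rw [deriv_comp_mul_sub_left (F := fun w => -(u * γ u * deriv φ w))
    (((hφ' _).hasDerivAt).const_mul (u * γ u)).neg]
  ring

lemma deriv_boostθ_velocity_position (hu : u ∈ Ioo (-1 : ℝ) 1) (hφ : Differentiable ℝ φ)
    (hφ' : Differentiable ℝ (deriv φ)) (ξ x : ℝ) :
    deriv (fun ξ' => deriv (fun u' => boostθ φ ξ' u' x) u) ξ =
      -(u * γ u ^ 3 * (deriv φ (γ u * (x - ξ))
        + γ u * (x - ξ) * deriv (deriv φ) (γ u * (x - ξ)))) := by
  simp_rw [deriv_boostθ_velocity hu hφ]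
  rw [deriv_comp_mul_sub_left (F := fun w => u * γ u ^ 2 * (w * deriv φ w))
    (((hasDerivAt_id' _).mul (hφ' _).hasDerivAt).const_mul (u * γ u ^ 2))]
  ring

lemma deriv_boostψ_velocity_position (hu : u ∈ Ioo (-1 : ℝ) 1) (hφ : Differentiable ℝ φ)
    (hpend : ∀ z, HasDerivAt (deriv φ) (sin (φ z)) z) (ξ x : ℝ) :
    deriv (fun ξ' => deriv (fun u' => boostψ φ ξ' u' x) u) ξ =
      γ u ^ 4 * ((1 + u ^ 2) * sin (φ (γ u * (x - ξ)))
        + u ^ 2 * (γ u * (x - ξ) * (cos (φ (γ u * (x - ξ))) * deriv φ (γ u * (x - ξ))))) := by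
  have hφ'' : deriv (deriv φ) = fun w => sin (φ w) := funext fun w => (hpend w).deriv
  simp_rw [deriv_boostψ_velocity hu (fun w => (hpend w).differentiableAt), hφ'']
  rw [deriv_comp_mul_sub_left (F := fun w => -(γ u ^ 3 * (deriv φ w + u ^ 2 * (w * sin (φ w)))))
    (((hpend _).add (((hasDerivAt_id' _).mul (hφ _).hasDerivAt.sin).const_mul (u ^ 2))).const_mul
      (γ u ^ 3)).neg]
  ring

lemma deriv_deriv_boostθ_velocity_space (hu : u ∈ Ioo (-1 : ℝ) 1) (hφ : Differentiable ℝ φ)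
    (hpend : ∀ z, HasDerivAt (deriv φ) (sin (φ z)) z) (ξ x : ℝ) :
    deriv (deriv (fun x' => deriv (fun u' => boostθ φ ξ u' x') u)) x =
      u * γ u ^ 4 * (2 * sin (φ (γ u * (x - ξ)))
        + γ u * (x - ξ) * (cos (φ (γ u * (x - ξ))) * deriv φ (γ u * (x - ξ)))) := by
  have hspace : deriv (fun x' => deriv (fun u' => boostθ φ ξ u' x') u) = fun x' =>
      γ u * (u * γ u ^ 2 * (deriv φ (γ u * (x' - ξ))
        + γ u * (x' - ξ) * sin (φ (γ u * (x' - ξ))))) := by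
    funext x'
    simp_rw [deriv_boostθ_velocity hu hφ]
    rw [deriv_comp_mul_sub_right (F := fun w => u * γ u ^ 2 * (w * deriv φ w))
      (((hasDerivAt_id' _).mul (hpend _)).const_mul _)]
    ring
  rw [hspace, deriv_comp_mul_sub_right
    (F := fun w => γ u * (u * γ u ^ 2 * (deriv φ w + w * sin (φ w))))
    ((((hpend _).add ((hasDerivAt_id' _).mul (hφ _).hasDerivAt.sin)).const_mul _).const_mul _)]
  ring

theorem linearization_boost_fst (hu : u ∈ Ioo (-1 : ℝ) 1) (hφ : Differentiable ℝ φ)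
    (hφ' : Differentiable ℝ (deriv φ)) (ξ x : ℝ) :
    u * deriv (fun ξ' => deriv (fun u' => boostθ φ ξ' u' x) u) ξ
        - deriv (fun u' => boostψ φ ξ u' x) u + deriv (fun ξ' => boostθ φ ξ' u x) ξ = 0 := by
  rw [deriv_boostθ_velocity_position hu hφ hφ', deriv_boostψ_velocity hu hφ',
    deriv_boostθ_position hφ]
  linear_combination γ u * deriv φ (γ u * (x - ξ)) * γ_sq_mul_one_sub_sq hu

theorem linearization_boost_snd (hu : u ∈ Ioo (-1 : ℝ) 1) (hφ : Differentiable ℝ φ)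
    (hpend : ∀ z, HasDerivAt (deriv φ) (sin (φ z)) z) (ξ x : ℝ) :
    u * deriv (fun ξ' => deriv (fun u' => boostψ φ ξ' u' x) u) ξ
        - deriv (deriv (fun x' => deriv (fun u' => boostθ φ ξ u' x') u)) x
        + cos (φ (γ u * (x - ξ))) * deriv (fun u' => boostθ φ ξ u' x) u
        + deriv (fun ξ' => boostψ φ ξ' u x) ξ = 0 := by
  rw [deriv_boostψ_velocity_position hu hφ hpend, deriv_deriv_boostθ_velocity_space hu hφ hpend,
    deriv_boostθ_velocity hu hφ, deriv_boostψ_position (fun w => (hpend w).differentiableAt),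
    (hpend _).deriv]
  linear_combination -(u * γ u ^ 2 * (sin (φ (γ u * (x - ξ)))
    + γ u * (x - ξ) * (cos (φ (γ u * (x - ξ))) * deriv φ (γ u * (x - ξ)))))
    * γ_sq_mul_one_sub_sq hu

end Boost

lemma sin_two_mul_arctan (t : ℝ) : sin (2 * arctan t) = 2 * t / (1 + t ^ 2) := by
  have h : 0 < 1 + t ^ 2 := by positivity
  rw [sin_two_mul, sin_arctan, cos_arctan]
  field_simp
  rw [sq_sqrt h.le]

lemma hasDerivAt_θK (z : ℝ) : HasDerivAt θK (2 * sin (θK z / 2)) z := by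
  refine (((hasDerivAt_arctan (exp z)).comp z (hasDerivAt_exp z)).const_mul 4).congr_deriv ?_
  rw [show θK z / 2 = 2 * arctan (exp z) by unfold θK; ring, sin_two_mul_arctan]
  ring

lemma differentiable_θK : Differentiable ℝ θK := fun z => (hasDerivAt_θK z).differentiableAt

lemma hasDerivAt_deriv_θK (z : ℝ) : HasDerivAt (deriv θK) (sin (θK z)) z := by
  rw [show deriv θK = fun z => 2 * sin (θK z / 2) from funext fun z => (hasDerivAt_θK z).deriv]
  refine ((((hasDerivAt_θK z).div_const 2).sin).const_mul 2).congr_deriv ?_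
  conv_rhs => rw [show θK z = 2 * (θK z / 2) by ring, sin_two_mul]
  ring

/-- The linearization of the stationary system maps the tangent vector
`t₂ = (∂_u θ₀, ∂_u ψ₀)` to `−t₁ = −(∂_ξ θ₀, ∂_ξ ψ₀)`. -/
theorem linearization_maps_t2_to_neg_t1 (u : ℝ) (hu : u ∈ Set.Ioo (-1 : ℝ) 1) :
    ∀ ξ x : ℝ,
      u * deriv (fun ξ' => t₂θ ξ' u x) ξ - t₂ψ ξ u x
          + deriv (fun ξ' => θ₀ ξ' u x) ξ = 0 ∧
      u * deriv (fun ξ' => t₂ψ ξ' u x) ξ - deriv (deriv (fun x' => t₂θ ξ u x')) x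
          + Real.cos (θK (γ u * (x - ξ))) * t₂θ ξ u x
          + deriv (fun ξ' => ψ₀ ξ' u x) ξ = 0 := fun ξ x =>
  ⟨linearization_boost_fst hu differentiable_θK
      (fun z => (hasDerivAt_deriv_θK z).differentiableAt) ξ x,
    linearization_boost_snd hu differentiable_θK hasDerivAt_deriv_θK ξ x⟩
end

section
/- There exists a real constant M > 0 such that for all natural numbers m and r, Σ_{l=3}^{m−2} Σ_{i=3}^{r−3} (m−1)·r(r−1)(r−2) / ((m−l−1)·l(l−1)·(r−i)(r−i−1)(r−i−2)·i(i−1)(i−2)) ≤ M; that is, these double sums are bounded uniformly in (m,r). -/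
/-- Telescoping bound: `∑_{l=3}^n 1/(l(l-1)) = 1/2 - 1/n` for `n ≥ 2`. -/
private lemma tel_sum (n : ℕ) (hn : 2 ≤ n) :
    ∑ l ∈ Finset.Icc 3 n, (1:ℝ)/((l:ℝ)*((l:ℝ)-1)) = 1/2 - 1/(n:ℝ) := by
  induction n, hn using Nat.le_induction with
  | base =>
    rw [show Finset.Icc 3 2 = (∅ : Finset ℕ) from rfl]
    norm_num
  | succ n hn ih =>
    rw [Finset.sum_Icc_succ_top (by omega : 3 ≤ n + 1), ih]
    have h2 : (2:ℝ) ≤ (n:ℝ) := by exact_mod_cast hn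
    have h0 : (n:ℝ) ≠ 0 := by linarith
    have h1 : (n:ℝ) + 1 ≠ 0 := by linarith
    push_cast
    have e : ((n:ℝ)+1)*(((n:ℝ)+1)-1) = ((n:ℝ)+1)*(n:ℝ) := by ring
    rw [e]
    field_simp
    ring

private lemma tel_le (n : ℕ) (hn : 2 ≤ n) :
    ∑ l ∈ Finset.Icc 3 n, (1:ℝ)/((l:ℝ)*((l:ℝ)-1)) ≤ 1 := by
  rw [tel_sum n hn]
  have h2 : (2:ℝ) ≤ (n:ℝ) := by exact_mod_cast hn
  have : 0 < 1/(n:ℝ) := by positivity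
  linarith

/-- Pointwise bound for the `l`-sum terms. -/
private lemma lterm (a y : ℝ) (ha : 3 ≤ a) (hy : 1 ≤ y) :
    (a + y) / (y * (a * (a - 1))) ≤ 1/(a*(a-1)) + 1/(a + y - 2) := by
  have h1 : 0 < y := by linarith
  have h2 : 0 < a - 1 := by linarith
  have h3 : 0 < a := by linarith
  have h4 : 0 < a + y - 2 := by linarith
  have key : (a+y)/(y*(a*(a-1))) = 1/(a*(a-1)) + 1/((a-1)*y) := by
    field_simp
    ring
  rw [key]
  have hle : a + y - 2 ≤ (a-1)*y := by nlinarith [(a-2)*(y-1)]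
  have : 1/((a-1)*y) ≤ 1/(a + y - 2) := one_div_le_one_div_of_le h4 hle
  linarith

/-- Pointwise bound for the `i`-sum terms. -/
private lemma iterm (x y : ℝ) (hx : 3 ≤ x) (hy : 3 ≤ y) :
    ((x+y) * ((x+y)-1) * ((x+y)-2)) / ((y*(y-1)*(y-2)) * (x*(x-1)*(x-2)))
      ≤ 8*(1/(x*(x-1))) + 8*(1/(y*(y-1))) + 16*(1/(x + y - 3)) := by
  have hx0 : 0 < x := by linarith
  have hx1 : 0 < x - 1 := by linarith
  have hx2 : 0 < x - 2 := by linarith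
  have hy0 : 0 < y := by linarith
  have hy1 : 0 < y - 1 := by linarith
  have hy2 : 0 < y - 2 := by linarith
  have hs : 0 < x + y - 3 := by linarith
  have e : ((x+y) * ((x+y)-1) * ((x+y)-2)) / ((y*(y-1)*(y-2)) * (x*(x-1)*(x-2)))
      = ((x+y)/(x*y)) * (((x+y)-1)/((x-1)*(y-1))) * (((x+y)-2)/((x-2)*(y-2))) := by
    rw [div_mul_div_comm, div_mul_div_comm]
    rw [show x*y*((x-1)*(y-1))*((x-2)*(y-2)) = y*(y-1)*(y-2)*(x*(x-1)*(x-2)) from by ring]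
  rw [e]
  have hA : (x+y)/(x*y) = 1/x + 1/y := by
    field_simp
    ring
  have hApos : (0:ℝ) ≤ (x+y)/(x*y) := by positivity
  have hBpos : (0:ℝ) ≤ ((x+y)-1)/((x-1)*(y-1)) :=
    div_nonneg (by linarith) (by positivity)
  have hB : ((x+y)-1)/((x-1)*(y-1)) ≤ 2*(1/(x-1)) + 2*(1/(y-1)) := by
    have e2 : 2*(1/(x-1)) + 2*(1/(y-1)) = (2*(x-1) + 2*(y-1))/((x-1)*(y-1)) := by
      field_simp
      ring
    rw [e2, div_le_div_iff₀ (by positivity) (by positivity)]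
    nlinarith [mul_nonneg (mul_nonneg hs.le hx1.le) hy1.le]
  have hC : ((x+y)-2)/((x-2)*(y-2)) ≤ 4 := by
    rw [div_le_iff₀ (by positivity)]
    nlinarith [(x-3)*(y-3)]
  have hCpos : (0:ℝ) ≤ ((x+y)-2)/((x-2)*(y-2)) :=
    div_nonneg (by linarith) (by positivity)
  have hP : (1/x + 1/y) * (1/(x-1) + 1/(y-1))
      ≤ 1/(x*(x-1)) + 1/(y*(y-1)) + 2*(1/((x-1)*(y-1))) := by
    have e3 : (1/x + 1/y) * (1/(x-1) + 1/(y-1))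
        = 1/(x*(x-1)) + 1/(y*(y-1)) + 1/(x*(y-1)) + 1/(y*(x-1)) := by
      field_simp
      ring
    rw [e3]
    have c1 : 1/(x*(y-1)) ≤ 1/((x-1)*(y-1)) := by
      apply one_div_le_one_div_of_le (by positivity)
      nlinarith
    have c2 : 1/(y*(x-1)) ≤ 1/((x-1)*(y-1)) := by
      apply one_div_le_one_div_of_le (by positivity)
      nlinarith
    linarith
  have hcross : 1/((x-1)*(y-1)) ≤ 1/(x + y - 3) := by
    apply one_div_le_one_div_of_le hs
    nlinarith [(x-2)*(y-2)]
  calc ((x+y)/(x*y)) * (((x+y)-1)/((x-1)*(y-1))) * (((x+y)-2)/((x-2)*(y-2)))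
      ≤ ((x+y)/(x*y)) * (((x+y)-1)/((x-1)*(y-1))) * 4 :=
        mul_le_mul_of_nonneg_left hC (by positivity)
    _ ≤ ((x+y)/(x*y)) * (2*(1/(x-1)) + 2*(1/(y-1))) * 4 := by
        apply mul_le_mul_of_nonneg_right _ (by norm_num)
        exact mul_le_mul_of_nonneg_left hB hApos
    _ = 8 * ((1/x + 1/y) * (1/(x-1) + 1/(y-1))) := by
        rw [hA]; ring
    _ ≤ 8 * (1/(x*(x-1)) + 1/(y*(y-1)) + 2*(1/((x-1)*(y-1)))) :=
        mul_le_mul_of_nonneg_left hP (by norm_num)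
    _ ≤ 8*(1/(x*(x-1))) + 8*(1/(y*(y-1))) + 16*(1/(x + y - 3)) := by
        nlinarith [hcross]

/-- The double sums
`Σ_{l=3}^{m−2} Σ_{i=3}^{r−3} (m−1)·r(r−1)(r−2) /
  ((m−l−1)·l(l−1)·(r−i)(r−i−1)(r−i−2)·i(i−1)(i−2))`
are bounded uniformly in `(m,r)`. -/
theorem double_sum_uniformly_bounded :
    ∃ M : ℝ, 0 < M ∧ ∀ m r : ℕ,
      ∑ l ∈ Finset.Icc 3 (m - 2), ∑ i ∈ Finset.Icc 3 (r - 3),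
          (((m - 1) * (r * (r - 1) * (r - 2)) : ℕ) : ℝ)
            / (((m - l - 1) * (l * (l - 1)) * ((r - i) * (r - i - 1) * (r - i - 2))
                * (i * (i - 1) * (i - 2)) : ℕ) : ℝ) ≤ M := by
  refine ⟨64, by norm_num, fun m r => ?_⟩
  by_cases hr : r < 6
  · have h : Finset.Icc 3 (r - 3) = (∅ : Finset ℕ) := Finset.Icc_eq_empty (by omega)
    simp [h]
  by_cases hm : m < 5
  · have h : Finset.Icc 3 (m - 2) = (∅ : Finset ℕ) := Finset.Icc_eq_empty (by omega)
    simp [h]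
  push_neg at hr hm
  -- Factor the summand
  have hfact : ∀ l i : ℕ,
      (((m - 1) * (r * (r - 1) * (r - 2)) : ℕ) : ℝ)
        / (((m - l - 1) * (l * (l - 1)) * ((r - i) * (r - i - 1) * (r - i - 2))
            * (i * (i - 1) * (i - 2)) : ℕ) : ℝ)
      = (((m-1 : ℕ)) : ℝ) / (((m - l - 1) * (l * (l-1)) : ℕ) : ℝ)
        * ((((r * (r-1) * (r-2) : ℕ)) : ℝ)
          / ((((r-i) * (r-i-1) * (r-i-2)) * (i * (i-1) * (i-2)) : ℕ) : ℝ)) := by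
    intro l i
    rw [div_mul_div_comm]
    push_cast
    ring
  have hFsum : ∑ l ∈ Finset.Icc 3 (m-2),
      (((m-1 : ℕ)) : ℝ) / (((m - l - 1) * (l * (l-1)) : ℕ) : ℝ) ≤ 2 := by
    have hb : ∀ l ∈ Finset.Icc 3 (m-2),
        (((m-1 : ℕ)) : ℝ) / (((m - l - 1) * (l * (l-1)) : ℕ) : ℝ)
          ≤ 1/((l:ℝ)*((l:ℝ)-1)) + 1/((m:ℝ)-3) := by
      intro l hl
      rw [Finset.mem_Icc] at hl
      have h3l : 3 ≤ l := hl.1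
      have hlm : l + 2 ≤ m := by omega
      have e1 : ((m-1:ℕ):ℝ) = (m:ℝ) - 1 := by
        rw [Nat.cast_sub (by omega)]; norm_num
      have e2 : ((m-l-1:ℕ):ℝ) = (m:ℝ) - (l:ℝ) - 1 := by
        rw [show m - l - 1 = m - (l+1) from by omega, Nat.cast_sub (by omega)]
        push_cast; ring
      have e3 : ((l-1:ℕ):ℝ) = (l:ℝ) - 1 := by
        rw [Nat.cast_sub (by omega)]; norm_num
      have hF' : (((m-1 : ℕ)) : ℝ) / (((m - l - 1) * (l * (l-1)) : ℕ) : ℝ)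
          = ((l:ℝ) + ((m:ℝ) - (l:ℝ) - 1)) / ((((m:ℝ) - (l:ℝ) - 1)) * ((l:ℝ) * ((l:ℝ)-1))) := by
        rw [Nat.cast_mul, Nat.cast_mul, e1, e2, e3]
        ring_nf
      rw [hF']
      have hx : (3:ℝ) ≤ (l:ℝ) := by exact_mod_cast h3l
      have hy : (1:ℝ) ≤ (m:ℝ) - (l:ℝ) - 1 := by
        have : ((l:ℝ) + 2) ≤ (m:ℝ) := by exact_mod_cast hlm
        linarith
      calc ((l:ℝ) + ((m:ℝ) - (l:ℝ) - 1)) / ((((m:ℝ) - (l:ℝ) - 1)) * ((l:ℝ) * ((l:ℝ)-1)))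
          ≤ 1/((l:ℝ)*((l:ℝ)-1)) + 1/((l:ℝ) + ((m:ℝ) - (l:ℝ) - 1) - 2) :=
            lterm (l:ℝ) ((m:ℝ) - (l:ℝ) - 1) hx hy
        _ = 1/((l:ℝ)*((l:ℝ)-1)) + 1/((m:ℝ)-3) := by
            rw [show (l:ℝ) + ((m:ℝ) - (l:ℝ) - 1) - 2 = (m:ℝ) - 3 from by ring]
    have hm3 : (0:ℝ) < (m:ℝ) - 3 := by
      have : (5:ℝ) ≤ (m:ℝ) := by exact_mod_cast hm
      linarith
    calc ∑ l ∈ Finset.Icc 3 (m-2),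
          (((m-1 : ℕ)) : ℝ) / (((m - l - 1) * (l * (l-1)) : ℕ) : ℝ)
        ≤ ∑ l ∈ Finset.Icc 3 (m-2), (1/((l:ℝ)*((l:ℝ)-1)) + 1/((m:ℝ)-3)) :=
          Finset.sum_le_sum hb
      _ = (∑ l ∈ Finset.Icc 3 (m-2), (1:ℝ)/((l:ℝ)*((l:ℝ)-1)))
          + ((Finset.Icc 3 (m-2)).card : ℝ) * (1/((m:ℝ)-3)) := by
          rw [Finset.sum_add_distrib, Finset.sum_const, nsmul_eq_mul]
      _ ≤ 1 + 1 := by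
          have t1 : ∑ l ∈ Finset.Icc 3 (m-2), (1:ℝ)/((l:ℝ)*((l:ℝ)-1)) ≤ 1 :=
            tel_le (m-2) (by omega)
          have hcard : (Finset.Icc 3 (m-2)).card = m - 4 := by
            rw [Nat.card_Icc]; omega
          have t2 : ((Finset.Icc 3 (m-2)).card : ℝ) * (1/((m:ℝ)-3)) ≤ 1 := by
            rw [hcard, Nat.cast_sub (by omega), mul_one_div, div_le_one hm3]
            push_cast; linarith
          linarith
      _ = 2 := by norm_num
  have hGsum : ∑ i ∈ Finset.Icc 3 (r-3),
      (((r * (r-1) * (r-2) : ℕ)) : ℝ)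
        / ((((r-i) * (r-i-1) * (r-i-2)) * (i * (i-1) * (i-2)) : ℕ) : ℝ) ≤ 32 := by
    have hr3 : (0:ℝ) < (r:ℝ) - 3 := by
      have : (6:ℝ) ≤ (r:ℝ) := by exact_mod_cast hr
      linarith
    have hb : ∀ i ∈ Finset.Icc 3 (r-3),
        (((r * (r-1) * (r-2) : ℕ)) : ℝ)
          / ((((r-i) * (r-i-1) * (r-i-2)) * (i * (i-1) * (i-2)) : ℕ) : ℝ)
        ≤ 8*(1/((i:ℝ)*((i:ℝ)-1))) + 8*(1/(((r-i:ℕ):ℝ)*(((r-i:ℕ):ℝ)-1)))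
          + 16*(1/((r:ℝ)-3)) := by
      intro i hi
      rw [Finset.mem_Icc] at hi
      have h3i : 3 ≤ i := hi.1
      have hir : i + 3 ≤ r := by omega
      have e1 : ((r-1:ℕ):ℝ) = (r:ℝ) - 1 := by rw [Nat.cast_sub (by omega)]; norm_num
      have e2 : ((r-2:ℕ):ℝ) = (r:ℝ) - 2 := by rw [Nat.cast_sub (by omega)]; norm_num
      have e3 : ((i-1:ℕ):ℝ) = (i:ℝ) - 1 := by rw [Nat.cast_sub (by omega)]; norm_num
      have e4 : ((i-2:ℕ):ℝ) = (i:ℝ) - 2 := by rw [Nat.cast_sub (by omega)]; norm_num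
      have e5 : ((r-i:ℕ):ℝ) = (r:ℝ) - (i:ℝ) := by
        rw [Nat.cast_sub (by omega)]
      have e6 : ((r-i-1:ℕ):ℝ) = (r:ℝ) - (i:ℝ) - 1 := by
        rw [show r - i - 1 = r - (i+1) from by omega, Nat.cast_sub (by omega)]
        push_cast; ring
      have e7 : ((r-i-2:ℕ):ℝ) = (r:ℝ) - (i:ℝ) - 2 := by
        rw [show r - i - 2 = r - (i+2) from by omega, Nat.cast_sub (by omega)]
        push_cast; ring
      set x : ℝ := (i:ℝ) with hxdef
      set y : ℝ := (r:ℝ) - (i:ℝ) with hydef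
      have hG' : (((r * (r-1) * (r-2) : ℕ)) : ℝ)
          / ((((r-i) * (r-i-1) * (r-i-2)) * (i * (i-1) * (i-2)) : ℕ) : ℝ)
          = ((x+y) * ((x+y)-1) * ((x+y)-2)) / ((y*(y-1)*(y-2)) * (x*(x-1)*(x-2))) := by
        push_cast [e1, e2, e3, e4, e5, e6, e7]
        rw [hxdef, hydef]
        ring_nf
      rw [hG', e5]
      have hx : (3:ℝ) ≤ x := by rw [hxdef]; exact_mod_cast h3i
      have hy : (3:ℝ) ≤ y := by
        have : ((i:ℝ) + 3) ≤ (r:ℝ) := by exact_mod_cast hir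
        rw [hydef]; linarith
      have key := iterm x y hx hy
      have exy : x + y - 3 = (r:ℝ) - 3 := by rw [hxdef, hydef]; ring
      rw [exy] at key
      exact key
    calc ∑ i ∈ Finset.Icc 3 (r-3),
          (((r * (r-1) * (r-2) : ℕ)) : ℝ)
            / ((((r-i) * (r-i-1) * (r-i-2)) * (i * (i-1) * (i-2)) : ℕ) : ℝ)
        ≤ ∑ i ∈ Finset.Icc 3 (r-3),
            (8*(1/((i:ℝ)*((i:ℝ)-1))) + 8*(1/(((r-i:ℕ):ℝ)*(((r-i:ℕ):ℝ)-1)))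
              + 16*(1/((r:ℝ)-3))) := Finset.sum_le_sum hb
      _ = 8 * (∑ i ∈ Finset.Icc 3 (r-3), (1:ℝ)/((i:ℝ)*((i:ℝ)-1)))
          + 8 * (∑ i ∈ Finset.Icc 3 (r-3), (1:ℝ)/(((r-i:ℕ):ℝ)*(((r-i:ℕ):ℝ)-1)))
          + ((Finset.Icc 3 (r-3)).card : ℝ) * (16*(1/((r:ℝ)-3))) := by
          rw [Finset.sum_add_distrib, Finset.sum_add_distrib, Finset.sum_const,
            nsmul_eq_mul, Finset.mul_sum, Finset.mul_sum]
      _ ≤ 8 * 1 + 8 * 1 + 16 := by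
          have t1 : ∑ i ∈ Finset.Icc 3 (r-3), (1:ℝ)/((i:ℝ)*((i:ℝ)-1)) ≤ 1 :=
            tel_le (r-3) (by omega)
          have t2 : ∑ i ∈ Finset.Icc 3 (r-3), (1:ℝ)/(((r-i:ℕ):ℝ)*(((r-i:ℕ):ℝ)-1)) ≤ 1 := by
            have hre : ∑ i ∈ Finset.Icc 3 (r-3), (1:ℝ)/(((r-i:ℕ):ℝ)*(((r-i:ℕ):ℝ)-1))
                = ∑ j ∈ Finset.Icc 3 (r-3), (1:ℝ)/((j:ℝ)*((j:ℝ)-1)) := by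
              apply Finset.sum_nbij' (i := fun a => r - a) (j := fun a => r - a)
              · intro a ha; rw [Finset.mem_Icc] at ha ⊢; omega
              · intro a ha; rw [Finset.mem_Icc] at ha ⊢; omega
              · intro a ha; rw [Finset.mem_Icc] at ha; omega
              · intro a ha; rw [Finset.mem_Icc] at ha; omega
              · intro a _; rfl
            rw [hre]
            exact tel_le (r-3) (by omega)
          have hcard : (Finset.Icc 3 (r-3)).card = r - 5 := by
            rw [Nat.card_Icc]; omega
          have t3 : ((Finset.Icc 3 (r-3)).card : ℝ) * (16*(1/((r:ℝ)-3))) ≤ 16 := by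
            rw [hcard, Nat.cast_sub (by omega)]
            rw [show (16:ℝ)*(1/((r:ℝ)-3)) = 16/((r:ℝ)-3) from by ring]
            rw [mul_div_assoc']
            rw [div_le_iff₀ hr3]
            push_cast; linarith
          linarith
      _ = 32 := by norm_num
  have hGnonneg : (0:ℝ) ≤ ∑ i ∈ Finset.Icc 3 (r-3),
      (((r * (r-1) * (r-2) : ℕ)) : ℝ)
        / ((((r-i) * (r-i-1) * (r-i-2)) * (i * (i-1) * (i-2)) : ℕ) : ℝ) :=
    Finset.sum_nonneg fun i _ => by positivity
  calc ∑ l ∈ Finset.Icc 3 (m - 2), ∑ i ∈ Finset.Icc 3 (r - 3),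
          (((m - 1) * (r * (r - 1) * (r - 2)) : ℕ) : ℝ)
            / (((m - l - 1) * (l * (l - 1)) * ((r - i) * (r - i - 1) * (r - i - 2))
                * (i * (i - 1) * (i - 2)) : ℕ) : ℝ)
      = (∑ l ∈ Finset.Icc 3 (m-2),
            (((m-1 : ℕ)) : ℝ) / (((m - l - 1) * (l * (l-1)) : ℕ) : ℝ))
        * (∑ i ∈ Finset.Icc 3 (r-3),
            (((r * (r-1) * (r-2) : ℕ)) : ℝ)
              / ((((r-i) * (r-i-1) * (r-i-2)) * (i * (i-1) * (i-2)) : ℕ) : ℝ)) := by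
        rw [Finset.sum_mul_sum]
        exact Finset.sum_congr rfl fun l _ => Finset.sum_congr rfl fun i _ => hfact l i
    _ ≤ 2 * 32 := mul_le_mul hFsum hGsum hGnonneg (by norm_num)
    _ = 64 := by norm_num
end

section
/- There exists a real constant M > 0 such that for every natural number r, Σ_{i=6}^{r−3} Σ_{p=3}^{i−3} r(r−1)(r−2) / ((r−i)(r−i−1)(r−i−2)·i·(i−p−1)(i−p−2)·p(p−1)(p−2)) ≤ M; that is, these double sums are bounded uniformly in r. -/
noncomputable def P3 (n : ℕ) : ℝ := 1/((n:ℝ)*((n:ℝ)-1)*((n:ℝ)-2))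
noncomputable def P2 (n : ℕ) : ℝ := 1/(((n:ℝ)-1)*((n:ℝ)-2))
noncomputable def Q2 (n : ℕ) : ℝ := 1/((n:ℝ)*((n:ℝ)-1))


lemma sumP3 (n : ℕ) : ∑ p ∈ Finset.Icc 3 n, P3 p ≤ 1/4 := by
  have key : ∀ m : ℕ, 2 ≤ m → ∑ p ∈ Finset.Icc 3 m, P3 p = 1/4 - 1/(2*(m:ℝ)*((m:ℝ)-1)) := by
    intro m hm
    induction m, hm using Nat.le_induction with
    | base => rw [Finset.Icc_eq_empty (by omega)]; norm_num
    | succ n hn ih =>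
      have h1 : (2:ℝ) ≤ (n:ℝ) := by exact_mod_cast hn
      have c1 : (0:ℝ) < (n:ℝ) - 1 := by linarith
      have c2 : (0:ℝ) < (n:ℝ) := by linarith
      have c3 : (0:ℝ) < (n:ℝ) + 1 := by linarith
      have d1 : ((n:ℝ)+1) * ((n:ℝ)+1-1) * ((n:ℝ)+1-2) ≠ 0 :=
        ne_of_gt (mul_pos (mul_pos c3 (by linarith)) (by linarith))
      have d2 : 2*(n:ℝ)*((n:ℝ)-1) ≠ 0 := ne_of_gt (mul_pos (by linarith) c1)
      have d3 : 2*((n:ℝ)+1)*(n:ℝ) ≠ 0 := ne_of_gt (mul_pos (by linarith) c2)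
      have hadd : P3 (n+1) = 1/(2*(n:ℝ)*((n:ℝ)-1)) - 1/(2*((n:ℝ)+1)*(n:ℝ)) := by
        unfold P3
        push_cast
        rw [div_sub_div _ _ d2 d3, div_eq_div_iff d1 (mul_ne_zero d2 d3)]
        ring
      rw [Finset.sum_Icc_succ_top (by omega), ih, hadd]
      push_cast
      ring
  rcases le_or_gt n 2 with h | h
  · rw [Finset.Icc_eq_empty (by omega)]; norm_num
  · have h2 : (2:ℝ) ≤ (n:ℝ) := by exact_mod_cast h.le.trans' (by omega)
    rw [key n (by omega)]
    have hp : 0 < 2*(n:ℝ)*((n:ℝ)-1) := by nlinarith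
    have : 0 < 1/(2*(n:ℝ)*((n:ℝ)-1)) := by positivity
    linarith

lemma sumP2 (n : ℕ) : ∑ p ∈ Finset.Icc 3 n, P2 p ≤ 1 := by
  have key : ∀ m : ℕ, 2 ≤ m → ∑ p ∈ Finset.Icc 3 m, P2 p = 1 - 1/((m:ℝ)-1) := by
    intro m hm
    induction m, hm using Nat.le_induction with
    | base => rw [Finset.Icc_eq_empty (by omega)]; norm_num
    | succ n hn ih =>
      have h1 : (2:ℝ) ≤ (n:ℝ) := by exact_mod_cast hn
      have c1 : (0:ℝ) < (n:ℝ) - 1 := by linarith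
      have c2 : (0:ℝ) < (n:ℝ) := by linarith
      have d1 : ((n:ℝ)+1-1) * ((n:ℝ)+1-2) ≠ 0 :=
        ne_of_gt (mul_pos (by linarith) (by linarith))
      have d2 : (n:ℝ)-1 ≠ 0 := ne_of_gt c1
      have d3 : (n:ℝ) ≠ 0 := ne_of_gt c2
      have hadd : P2 (n+1) = 1/((n:ℝ)-1) - 1/(n:ℝ) := by
        unfold P2
        push_cast
        rw [div_sub_div _ _ d2 d3, div_eq_div_iff d1 (mul_ne_zero d2 d3)]
        ring
      rw [Finset.sum_Icc_succ_top (by omega), ih, hadd]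
      push_cast
      ring
  rcases le_or_gt n 2 with h | h
  · rw [Finset.Icc_eq_empty (by omega)]; norm_num
  · have h2 : (2:ℝ) ≤ (n:ℝ) := by exact_mod_cast h.le.trans' (by omega)
    rw [key n (by omega)]
    have hp : (0:ℝ) < (n:ℝ) - 1 := by linarith
    have : 0 < 1/((n:ℝ)-1) := by positivity
    linarith

lemma sumQ2 (n : ℕ) : ∑ i ∈ Finset.Icc 6 n, Q2 i ≤ 1/5 := by
  have key : ∀ m : ℕ, 5 ≤ m → ∑ i ∈ Finset.Icc 6 m, Q2 i = 1/5 - 1/(m:ℝ) := by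
    intro m hm
    induction m, hm using Nat.le_induction with
    | base => rw [Finset.Icc_eq_empty (by omega)]; norm_num
    | succ n hn ih =>
      have h1 : (5:ℝ) ≤ (n:ℝ) := by exact_mod_cast hn
      have c2 : (0:ℝ) < (n:ℝ) := by linarith
      have c3 : (0:ℝ) < (n:ℝ) + 1 := by linarith
      have d1 : ((n:ℝ)+1) * ((n:ℝ)+1-1) ≠ 0 :=
        ne_of_gt (mul_pos c3 (by linarith))
      have d2 : (n:ℝ) ≠ 0 := ne_of_gt c2
      have d3 : (n:ℝ)+1 ≠ 0 := ne_of_gt c3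
      have hadd : Q2 (n+1) = 1/(n:ℝ) - 1/((n:ℝ)+1) := by
        unfold Q2
        push_cast
        rw [div_sub_div _ _ d2 d3, div_eq_div_iff d1 (mul_ne_zero d2 d3)]
        ring
      rw [Finset.sum_Icc_succ_top (by omega), ih, hadd]
      push_cast
      ring
  rcases le_or_gt n 5 with h | h
  · rw [Finset.Icc_eq_empty (by omega)]; norm_num
  · have h2 : (5:ℝ) ≤ (n:ℝ) := by exact_mod_cast h.le.trans' (by omega)
    rw [key n (by omega)]
    have hp : (0:ℝ) < (n:ℝ) := by linarith
    have : 0 < 1/(n:ℝ) := by positivity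
    linarith

set_option maxHeartbeats 1000000 in

lemma pointwise_real (x y z : ℝ) (hz : 3 ≤ z) (hzy : z + 3 ≤ y) (hyx : y + 3 ≤ x) :
    x*(x-1)*(x-2) /
      ((x-y)*((x-y)-1)*((x-y)-2) * y * ((y-z-1)*(y-z-2)) * (z*(z-1)*(z-2)))
    ≤ (81/2)*( 1/((x-y)*((x-y)-1)*((x-y)-2)) * (1/((y-z-1)*(y-z-2))) )
      + (81/2)*( 1/((x-y)*((x-y)-1)*((x-y)-2)) * (1/(z*(z-1)*(z-2))) )
      + (243/4)*( 1/(y*(y-1)) * (1/((z-1)*(z-2))) ) := by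
  have hc3 : (3:ℝ) ≤ x - y := by linarith
  have hb3 : (3:ℝ) ≤ y - z := by linarith
  have hPc : (0:ℝ) < (x-y)*((x-y)-1)*((x-y)-2) :=
    mul_pos (mul_pos (by linarith) (by linarith)) (by linarith)
  have hQb : (0:ℝ) < (y-z-1)*(y-z-2) := mul_pos (by linarith) (by linarith)
  have hPa : (0:ℝ) < z*(z-1)*(z-2) :=
    mul_pos (mul_pos (by linarith) (by linarith)) (by linarith)
  have hRa : (0:ℝ) < (z-1)*(z-2) := mul_pos (by linarith) (by linarith)
  have hy : (0:ℝ) < y := by linarith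
  have hyy : (0:ℝ) < y*(y-1) := mul_pos hy (by linarith)
  have hD : (0:ℝ) < (x-y)*((x-y)-1)*((x-y)-2) * y * ((y-z-1)*(y-z-2)) * (z*(z-1)*(z-2)) :=
    mul_pos (mul_pos (mul_pos hPc hy) hQb) hPa
  -- numerator bound
  have hN : x*(x-1)*(x-2) ≤ 9*z^3 + 9*(y-z)^3 + 9*(x-y)^3 := by
    nlinarith [sq_nonneg (z-(y-z)), sq_nonneg ((y-z)-(x-y)), sq_nonneg (z-(x-y)),
      mul_nonneg (mul_nonneg (by linarith : (0:ℝ) ≤ z) (by linarith : (0:ℝ) ≤ y-z)) (by linarith : (0:ℝ) ≤ x-y),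
      mul_nonneg (sq_nonneg (z-(y-z))) (by linarith : (0:ℝ) ≤ z+(y-z)),
      mul_nonneg (sq_nonneg ((y-z)-(x-y))) (by linarith : (0:ℝ) ≤ (y-z)+(x-y)),
      mul_nonneg (sq_nonneg (z-(x-y))) (by linarith : (0:ℝ) ≤ z+(x-y)),
      sq_nonneg (x-1), sq_nonneg (x-2), (by linarith : (9:ℝ) ≤ x)]
  have t1 : 9*z^3 / ((x-y)*((x-y)-1)*((x-y)-2) * y * ((y-z-1)*(y-z-2)) * (z*(z-1)*(z-2)))
      ≤ (81/2)*( 1/((x-y)*((x-y)-1)*((x-y)-2)) * (1/((y-z-1)*(y-z-2))) ) := by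
    have hrw : (81/2)*( 1/((x-y)*((x-y)-1)*((x-y)-2)) * (1/((y-z-1)*(y-z-2))) )
        = (81/2) / ((x-y)*((x-y)-1)*((x-y)-2) * ((y-z-1)*(y-z-2))) := by
      field_simp
    rw [hrw, div_le_div_iff₀ hD (mul_pos hPc hQb)]
    have key : 9*z^3 ≤ (81/2) * (y * (z*(z-1)*(z-2))) := by nlinarith
    linarith [mul_le_mul_of_nonneg_right key (le_of_lt (mul_pos hPc hQb))]
  have t2 : 9*(y-z)^3 / ((x-y)*((x-y)-1)*((x-y)-2) * y * ((y-z-1)*(y-z-2)) * (z*(z-1)*(z-2)))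
      ≤ (81/2)*( 1/((x-y)*((x-y)-1)*((x-y)-2)) * (1/(z*(z-1)*(z-2))) ) := by
    have hrw : (81/2)*( 1/((x-y)*((x-y)-1)*((x-y)-2)) * (1/(z*(z-1)*(z-2))) )
        = (81/2) / ((x-y)*((x-y)-1)*((x-y)-2) * (z*(z-1)*(z-2))) := by
      field_simp
    rw [hrw, div_le_div_iff₀ hD (mul_pos hPc hPa)]
    have key : 9*(y-z)^3 ≤ (81/2) * (y * ((y-z-1)*(y-z-2))) := by
      nlinarith [mul_nonneg (mul_nonneg (by linarith : (0:ℝ) ≤ y-z-3) (by linarith : (0:ℝ) ≤ y-z)) (by linarith : (0:ℝ) ≤ y-z),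
        mul_nonneg (by linarith : (0:ℝ) ≤ z) (by nlinarith : (0:ℝ) ≤ (y-z-1)*(y-z-2))]
    linarith [mul_le_mul_of_nonneg_right key (le_of_lt (mul_pos hPc hPa))]
  have t3 : 9*(x-y)^3 / ((x-y)*((x-y)-1)*((x-y)-2) * y * ((y-z-1)*(y-z-2)) * (z*(z-1)*(z-2)))
      ≤ (243/4)*( 1/(y*(y-1)) * (1/((z-1)*(z-2))) ) := by
    have hrw : (243/4)*( 1/(y*(y-1)) * (1/((z-1)*(z-2))) )
        = (243/4) / (y*(y-1) * ((z-1)*(z-2))) := by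
      field_simp
    rw [hrw, div_le_div_iff₀ hD (mul_pos hyy hRa)]
    -- need: 9*(x-y)^3 * (y*(y-1)*((z-1)*(z-2))) ≤ (243/4) * D
    -- via 9c^3*(y-1) ≤ (243/4) * Pc * Qb * z
    have k1 : 2*(x-y)^3 ≤ 9*((x-y)*((x-y)-1)*((x-y)-2)) := by
      nlinarith [mul_nonneg (mul_nonneg (by linarith : (0:ℝ) ≤ x-y) (by linarith : (0:ℝ) ≤ x-y-3)) (by linarith : (0:ℝ) ≤ 7*(x-y)-6)]
    have k2 : y - 1 ≤ z*(y-z) := by nlinarith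
    have k3 : 2*(y-z) ≤ 3*((y-z-1)*(y-z-2)) := by nlinarith
    have key : 9*(x-y)^3 * (y-1) ≤ (243/4) * ((x-y)*((x-y)-1)*((x-y)-2) * ((y-z-1)*(y-z-2)) * z) := by
      have s1 : 9*(x-y)^3 * (y-1) ≤ 9*(x-y)^3 * (z*(y-z)) := by
        have h0 : (0:ℝ) ≤ 9*(x-y)^3 := by positivity
        linarith [mul_le_mul_of_nonneg_left k2 h0]
      have s2 : 9*(x-y)^3 * (z*(y-z)) ≤ (81/2)*((x-y)*((x-y)-1)*((x-y)-2)) * (z*(y-z)) := by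
        have hzy0 : (0:ℝ) ≤ z*(y-z) := mul_nonneg (by linarith) (by linarith)
        linarith [mul_le_mul_of_nonneg_right k1 hzy0]
      have s3 : (81/2)*((x-y)*((x-y)-1)*((x-y)-2)) * (z*(y-z))
          ≤ (243/4) * ((x-y)*((x-y)-1)*((x-y)-2) * ((y-z-1)*(y-z-2)) * z) := by
        have hPz : (0:ℝ) ≤ ((x-y)*((x-y)-1)*((x-y)-2)) * z := mul_nonneg hPc.le (by linarith)
        linarith [mul_le_mul_of_nonneg_left k3 hPz]
      linarith
    linarith [mul_le_mul_of_nonneg_right key (mul_nonneg hy.le hRa.le)]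
  calc x*(x-1)*(x-2) / ((x-y)*((x-y)-1)*((x-y)-2) * y * ((y-z-1)*(y-z-2)) * (z*(z-1)*(z-2)))
      ≤ (9*z^3 + 9*(y-z)^3 + 9*(x-y)^3) / ((x-y)*((x-y)-1)*((x-y)-2) * y * ((y-z-1)*(y-z-2)) * (z*(z-1)*(z-2))) := by
        exact div_le_div_of_nonneg_right hN hD.le |>.trans_eq rfl
    _ = 9*z^3 / ((x-y)*((x-y)-1)*((x-y)-2) * y * ((y-z-1)*(y-z-2)) * (z*(z-1)*(z-2)))
        + 9*(y-z)^3 / ((x-y)*((x-y)-1)*((x-y)-2) * y * ((y-z-1)*(y-z-2)) * (z*(z-1)*(z-2)))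
        + 9*(x-y)^3 / ((x-y)*((x-y)-1)*((x-y)-2) * y * ((y-z-1)*(y-z-2)) * (z*(z-1)*(z-2))) := by
        rw [← add_div, ← add_div]
    _ ≤ _ := by exact add_le_add (add_le_add t1 t2) t3

lemma pointwise_nat (r i p : ℕ) (h3 : 3 ≤ p) (hpi : p + 3 ≤ i) (hir : i + 3 ≤ r) :
    ((r * (r - 1) * (r - 2) : ℕ) : ℝ)
      / ((((r - i) * (r - i - 1) * (r - i - 2)) * i
          * ((i - p - 1) * (i - p - 2)) * (p * (p - 1) * (p - 2)) : ℕ) : ℝ)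
    ≤ ((81:ℝ)/2 * P3 (r-i)) * P2 (i-p) + ((81:ℝ)/2 * P3 (r-i)) * P3 p
      + ((243:ℝ)/4 * Q2 i) * P2 p := by
  have H := pointwise_real (r:ℝ) (i:ℝ) (p:ℝ) (by exact_mod_cast h3)
    (by exact_mod_cast hpi) (by exact_mod_cast hir)
  have c1 : ((r - i : ℕ) : ℝ) = (r:ℝ) - (i:ℝ) := by
    rw [Nat.cast_sub (by omega)]
  have c2 : ((r - i - 1 : ℕ) : ℝ) = (r:ℝ) - (i:ℝ) - 1 := by
    rw [Nat.cast_sub (by omega), Nat.cast_sub (by omega)]; push_cast; ring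
  have c3 : ((r - i - 2 : ℕ) : ℝ) = (r:ℝ) - (i:ℝ) - 2 := by
    rw [Nat.cast_sub (by omega), Nat.cast_sub (by omega)]; push_cast; ring
  have c4 : ((i - p : ℕ) : ℝ) = (i:ℝ) - (p:ℝ) := by
    rw [Nat.cast_sub (by omega)]
  have c5 : ((i - p - 1 : ℕ) : ℝ) = (i:ℝ) - (p:ℝ) - 1 := by
    rw [Nat.cast_sub (by omega), Nat.cast_sub (by omega)]; push_cast; ring
  have c6 : ((i - p - 2 : ℕ) : ℝ) = (i:ℝ) - (p:ℝ) - 2 := by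
    rw [Nat.cast_sub (by omega), Nat.cast_sub (by omega)]; push_cast; ring
  have c7 : ((p - 1 : ℕ) : ℝ) = (p:ℝ) - 1 := by rw [Nat.cast_sub (by omega)]; push_cast; ring
  have c8 : ((p - 2 : ℕ) : ℝ) = (p:ℝ) - 2 := by rw [Nat.cast_sub (by omega)]; push_cast; ring
  have c9 : ((r - 1 : ℕ) : ℝ) = (r:ℝ) - 1 := by rw [Nat.cast_sub (by omega)]; push_cast; ring
  have c10 : ((r - 2 : ℕ) : ℝ) = (r:ℝ) - 2 := by rw [Nat.cast_sub (by omega)]; push_cast; ring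
  refine le_trans (le_of_eq ?_) (H.trans (le_of_eq ?_))
  · push_cast [c1, c2, c3, c5, c6, c7, c8, c9, c10]
    ring
  · simp only [P3, P2, Q2, c1, c2, c3, c4, c5, c6, c7, c8]
    push_cast [c1, c2, c3, c4, c5, c6, c7, c8]
    ring

lemma P3_nonneg {n : ℕ} (h : 3 ≤ n) : 0 ≤ P3 n := by
  unfold P3
  have h3 : (3:ℝ) ≤ (n:ℝ) := by exact_mod_cast h
  have : (0:ℝ) < (n:ℝ)*((n:ℝ)-1)*((n:ℝ)-2) :=
    mul_pos (mul_pos (by linarith) (by linarith)) (by linarith)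
  positivity

lemma Q2_nonneg {n : ℕ} (h : 2 ≤ n) : 0 ≤ Q2 n := by
  unfold Q2
  have h2 : (2:ℝ) ≤ (n:ℝ) := by exact_mod_cast h
  have : (0:ℝ) < (n:ℝ)*((n:ℝ)-1) := mul_pos (by linarith) (by linarith)
  positivity

lemma reflect_sum (f : ℕ → ℝ) (l u m : ℕ) (hl : 3 ≤ l) (hum : u + 3 ≤ m) :
    ∑ j ∈ Finset.Icc l u, f (m - j) = ∑ j ∈ Finset.Icc (m - u) (m - l), f j := by
  apply Finset.sum_nbij' (fun j => m - j) (fun j => m - j)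
  · intro a ha; simp only [Finset.mem_Icc] at ha ⊢; omega
  · intro a ha; simp only [Finset.mem_Icc] at ha ⊢; omega
  · intro a ha; simp only [Finset.mem_Icc] at ha; omega
  · intro a ha; simp only [Finset.mem_Icc] at ha; omega
  · intro a _; rfl

/-- The double sums
`Σ_{i=6}^{r−3} Σ_{p=3}^{i−3} r(r−1)(r−2) /
  ((r−i)(r−i−1)(r−i−2)·i·(i−p−1)(i−p−2)·p(p−1)(p−2))`
are bounded uniformly in `r`. -/
theorem double_sum_uniformly_bounded_in_r :
    ∃ M : ℝ, 0 < M ∧ ∀ r : ℕ,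
      ∑ i ∈ Finset.Icc 6 (r - 3), ∑ p ∈ Finset.Icc 3 (i - 3),
          ((r * (r - 1) * (r - 2) : ℕ) : ℝ)
            / ((((r - i) * (r - i - 1) * (r - i - 2)) * i
                * ((i - p - 1) * (i - p - 2)) * (p * (p - 1) * (p - 2)) : ℕ) : ℝ) ≤ M := by
  refine ⟨50, by norm_num, fun r => ?_⟩
  rcases le_or_gt r 8 with hr | hr
  · rw [Finset.Icc_eq_empty (by omega)]
    simp only [Finset.sum_empty]
    norm_num
  · -- r ≥ 9
    have step1 : ∑ i ∈ Finset.Icc 6 (r - 3), ∑ p ∈ Finset.Icc 3 (i - 3),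
          ((r * (r - 1) * (r - 2) : ℕ) : ℝ)
            / ((((r - i) * (r - i - 1) * (r - i - 2)) * i
                * ((i - p - 1) * (i - p - 2)) * (p * (p - 1) * (p - 2)) : ℕ) : ℝ)
        ≤ ∑ i ∈ Finset.Icc 6 (r - 3), (((405:ℝ)/8) * P3 (r-i) + ((243:ℝ)/4) * Q2 i) := by
      apply Finset.sum_le_sum
      intro i hi
      obtain ⟨hi6, hir3⟩ := Finset.mem_Icc.mp hi
      have hir : i + 3 ≤ r := by omega
      have hP3nn : 0 ≤ P3 (r - i) := P3_nonneg (by omega)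
      have hQ2nn : 0 ≤ Q2 i := Q2_nonneg (by omega)
      calc ∑ p ∈ Finset.Icc 3 (i - 3),
            ((r * (r - 1) * (r - 2) : ℕ) : ℝ)
              / ((((r - i) * (r - i - 1) * (r - i - 2)) * i
                  * ((i - p - 1) * (i - p - 2)) * (p * (p - 1) * (p - 2)) : ℕ) : ℝ)
          ≤ ∑ p ∈ Finset.Icc 3 (i - 3),
              (((81:ℝ)/2 * P3 (r-i)) * P2 (i-p) + ((81:ℝ)/2 * P3 (r-i)) * P3 p
                + ((243:ℝ)/4 * Q2 i) * P2 p) := by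
            apply Finset.sum_le_sum
            intro p hp
            obtain ⟨hp3, hpi3⟩ := Finset.mem_Icc.mp hp
            exact pointwise_nat r i p hp3 (by omega) hir
        _ = ((81:ℝ)/2 * P3 (r-i)) * (∑ p ∈ Finset.Icc 3 (i - 3), P2 (i-p))
            + ((81:ℝ)/2 * P3 (r-i)) * (∑ p ∈ Finset.Icc 3 (i - 3), P3 p)
            + ((243:ℝ)/4 * Q2 i) * (∑ p ∈ Finset.Icc 3 (i - 3), P2 p) := by
            rw [Finset.sum_add_distrib, Finset.sum_add_distrib,
              ← Finset.mul_sum, ← Finset.mul_sum, ← Finset.mul_sum]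
        _ ≤ ((81:ℝ)/2 * P3 (r-i)) * 1 + ((81:ℝ)/2 * P3 (r-i)) * (1/4)
            + ((243:ℝ)/4 * Q2 i) * 1 := by
            have e1 : ∑ p ∈ Finset.Icc 3 (i - 3), P2 (i-p)
                = ∑ b ∈ Finset.Icc (i - (i-3)) (i - 3), P2 b :=
              reflect_sum P2 3 (i-3) i (by omega) (by omega)
            have e1' : i - (i - 3) = 3 := by omega
            rw [e1'] at e1
            have b1 : ∑ p ∈ Finset.Icc 3 (i - 3), P2 (i-p) ≤ 1 := e1 ▸ sumP2 (i-3)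
            have b2 := sumP3 (i-3)
            have b3 := sumP2 (i-3)
            have m1 := mul_le_mul_of_nonneg_left b1 (by positivity : (0:ℝ) ≤ (81:ℝ)/2 * P3 (r-i))
            have m2 := mul_le_mul_of_nonneg_left b2 (by positivity : (0:ℝ) ≤ (81:ℝ)/2 * P3 (r-i))
            have m3 := mul_le_mul_of_nonneg_left b3 (by positivity : (0:ℝ) ≤ (243:ℝ)/4 * Q2 i)
            linarith
        _ = ((405:ℝ)/8) * P3 (r-i) + ((243:ℝ)/4) * Q2 i := by ring
    have step2 : ∑ i ∈ Finset.Icc 6 (r - 3), (((405:ℝ)/8) * P3 (r-i) + ((243:ℝ)/4) * Q2 i)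
        ≤ (405:ℝ)/8 * (1/4) + (243:ℝ)/4 * (1/5) := by
      rw [Finset.sum_add_distrib, ← Finset.mul_sum, ← Finset.mul_sum]
      have e1 : ∑ i ∈ Finset.Icc 6 (r - 3), P3 (r-i)
          = ∑ c ∈ Finset.Icc (r - (r-3)) (r - 6), P3 c :=
        reflect_sum P3 6 (r-3) r (by omega) (by omega)
      have e1' : r - (r - 3) = 3 := by omega
      rw [e1'] at e1
      have b1 : ∑ i ∈ Finset.Icc 6 (r - 3), P3 (r-i) ≤ 1/4 := e1 ▸ sumP3 (r-6)
      have b2 := sumQ2 (r-3)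
      have m1 := mul_le_mul_of_nonneg_left b1 (by norm_num : (0:ℝ) ≤ (405:ℝ)/8)
      have m2 := mul_le_mul_of_nonneg_left b2 (by norm_num : (0:ℝ) ≤ (243:ℝ)/4)
      linarith
    calc _ ≤ _ := step1
      _ ≤ (405:ℝ)/8 * (1/4) + (243:ℝ)/4 * (1/5) := step2
      _ ≤ 50 := by norm_num
end

section
/- For every u* ∈ (0,1) there exists a constant C > 0 such that for every natural number m ≥ 3, the supremum over all u with |u| ≤ u* and all ξ, x ∈ ℝ of |∂_u^m [cos(θ_K(γ(u)(x−ξ)))]| is at most (m−3)!·C^{2m−3}, where ∂_u^m denotes the m-fold partial derivative with respect to u. -/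
/-!
Since `cos (θK y) = 1 - 2 / cosh² y`, the function `u ↦ cos (θK (γ u * s))` is the restriction
to the real axis of `w ↦ 1 - 2 / cosh² ((1 - w²)^(-1/2) * s)`, which is holomorphic wherever
`Re (1 - w²) > 0`. There `(1 - w²)^(-1/2)` has argument in `[-π/4, π/4]`, so
`z = (1 - w²)^(-1/2) * s` satisfies `|Im z| ≤ |Re z|` and hence `‖cosh z‖ ≥ cos 1`, uniformly
in `s`. Cauchy's estimate on discs of radius `r = (1 - u*)/2` bounds the `m`-th derivative by
`m! M / r^m` with `M = 1 + 2 / cos² 1`, and `m! ≤ (m - 3)! 8^m` turns this into the claimed shape.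
-/

open scoped Topology Nat

open Real in
lemma cos_θK (y : ℝ) : cos (θK y) = 1 - 2 / cosh y ^ 2 := by
  have h4 : θK y = 2 * (2 * arctan (exp y)) := by rw [θK]; ring
  have hc : cosh y = (exp y + (exp y)⁻¹) / 2 := by rw [cosh_eq, exp_neg]
  have hpos := exp_pos y
  rw [h4, cos_two_mul, cos_two_mul, cos_sq_arctan, hc]
  field_simp
  ring

open Real in
lemma Real.abs_sin_le_cos {t : ℝ} (h : |t| ≤ π / 4) : |sin t| ≤ cos t := by
  rw [← cos_abs, ← sin_pi_div_two_sub, abs_sin_eq_sin_abs_of_abs_le_pi (by linarith [pi_pos])]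
  exact sin_le_sin_of_le_of_le_pi_div_two (by linarith [abs_nonneg t]) (by linarith [abs_nonneg t])
    (by linarith)

lemma Complex.abs_im_exp_le_re {c : ℂ} (h : |c.im| ≤ Real.pi / 4) :
    |(exp c).im| ≤ (exp c).re := by
  rw [exp_re, exp_im, abs_mul, abs_of_pos (Real.exp_pos _)]
  exact mul_le_mul_of_nonneg_left (Real.abs_sin_le_cos h) (Real.exp_pos _).le

lemma Complex.abs_im_cpow_neg_half_le_re {ζ : ℂ} (hζ : 0 < ζ.re) :
    |(ζ ^ (-(1 / 2) : ℂ)).im| ≤ (ζ ^ (-(1 / 2) : ℂ)).re := by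
  have hζ0 : ζ ≠ 0 := fun h => by simp [h] at hζ
  rw [cpow_def_of_ne_zero hζ0]
  apply abs_im_exp_le_re
  have harg : |ζ.arg| < Real.pi / 2 := abs_arg_lt_pi_div_two_iff.mpr (Or.inl hζ)
  have : (log ζ * -(1 / 2)).im = -ζ.arg / 2 := by simp [log_im]; ring
  rw [this, abs_div, abs_neg, abs_two]
  linarith

lemma Complex.normSq_cosh (z : ℂ) :
    normSq (cosh z) = Real.sinh z.re ^ 2 + Real.cos z.im ^ 2 := by
  have h : cosh z =
      (Real.cosh z.re * Real.cos z.im : ℝ) + (Real.sinh z.re * Real.sin z.im : ℝ) * I := by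
    conv_lhs => rw [← re_add_im z]
    rw [cosh_add, cosh_mul_I, sinh_mul_I]
    push_cast; ring
  rw [h, normSq_add_mul_I]
  nlinarith [Real.sin_sq_add_cos_sq z.im, Real.cosh_sq z.re]

lemma Complex.cos_one_le_norm_cosh {z : ℂ} (h : |z.im| ≤ |z.re|) :
    Real.cos 1 ≤ ‖cosh z‖ := by
  have hc1 := Real.cos_one_pos
  have key : Real.cos 1 ^ 2 ≤ Real.sinh z.re ^ 2 + Real.cos z.im ^ 2 := by
    rcases le_or_gt |z.im| 1 with hy | hy
    · have : Real.cos 1 ≤ Real.cos z.im := by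
        rw [← Real.cos_abs z.im]
        exact Real.cos_le_cos_of_nonneg_of_le_pi (abs_nonneg _)
          (by linarith [Real.pi_gt_three]) hy
      nlinarith [sq_nonneg (Real.sinh z.re)]
    · have hsinh : 1 < Real.sinh |z.re| :=
        (Real.self_lt_sinh_iff.mpr one_pos).trans_le (Real.sinh_le_sinh.mpr (hy.trans_le h).le)
      rw [← Real.abs_sinh] at hsinh
      nlinarith [Real.cos_le_one 1, sq_nonneg (Real.cos z.im), sq_abs (Real.sinh z.re)]
  rw [← Real.sqrt_sq hc1.le, norm_def, normSq_cosh]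
  exact Real.sqrt_le_sqrt key

noncomputable def γC (w : ℂ) : ℂ := (1 - w ^ 2) ^ (-(1 / 2) : ℂ)

def γRegion : Set ℂ := {w | 0 < (1 - w ^ 2).re}

noncomputable def cosKinkC (s : ℝ) (w : ℂ) : ℂ := 1 - 2 / Complex.cosh (γC w * s) ^ 2

lemma isOpen_γRegion : IsOpen γRegion :=
  isOpen_lt continuous_const (by fun_prop)

lemma mem_γRegion_of_abs_re_lt_one {w : ℂ} (hw : |w.re| < 1) : w ∈ γRegion := by
  have : (1 - w ^ 2).re = 1 - w.re ^ 2 + w.im ^ 2 := by simp [sq]; ring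
  rw [γRegion, Set.mem_ofPred_eq, this]
  nlinarith [sq_abs w.re, abs_nonneg w.re, sq_nonneg w.im]

lemma γC_ofReal {v : ℝ} (hv : |v| < 1) : γC v = γ v := by
  have hpos : 0 < 1 - v ^ 2 := by nlinarith [sq_abs v, abs_nonneg v]
  have : γ v = (1 - v ^ 2) ^ (-(1 / 2) : ℝ) := by
    rw [γ, Real.sqrt_eq_rpow, Real.rpow_neg hpos.le, one_div]
  rw [this, Complex.ofReal_cpow hpos.le, γC]
  push_cast
  rfl

lemma cos_one_le_norm_cosh_γC_mul {w : ℂ} (hw : w ∈ γRegion) (s : ℝ) :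
    Real.cos 1 ≤ ‖Complex.cosh (γC w * s)‖ := by
  have hg : |(γC w).im| ≤ (γC w).re := Complex.abs_im_cpow_neg_half_le_re hw
  apply Complex.cos_one_le_norm_cosh
  rw [Complex.im_mul_ofReal, Complex.re_mul_ofReal, abs_mul, abs_mul,
    abs_of_nonneg ((abs_nonneg _).trans hg)]
  exact mul_le_mul_of_nonneg_right hg (abs_nonneg s)

lemma differentiableOn_cosKinkC (s : ℝ) : DifferentiableOn ℂ (cosKinkC s) γRegion := by
  intro w hw
  have hγC : DifferentiableAt ℂ γC w :=
    ((differentiableAt_const _).sub (differentiableAt_pow 2)).cpow (differentiableAt_const _)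
      (Complex.mem_slitPlane_iff.mpr (Or.inl hw))
  have hcosh : Complex.cosh (γC w * s) ≠ 0 := fun h => by
    have := cos_one_le_norm_cosh_γC_mul hw s
    rw [h, norm_zero] at this
    linarith [Real.cos_one_pos]
  exact ((differentiableAt_const _).sub ((differentiableAt_const _).div
    ((hγC.mul_const _).ccosh.pow 2) (pow_ne_zero 2 hcosh))).differentiableWithinAt

lemma norm_cosKinkC_le {w : ℂ} (hw : w ∈ γRegion) (s : ℝ) :
    ‖cosKinkC s w‖ ≤ 1 + 2 / Real.cos 1 ^ 2 := by
  have hc1 := Real.cos_one_pos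
  have hcosh := cos_one_le_norm_cosh_γC_mul hw s
  calc ‖cosKinkC s w‖ ≤ ‖(1 : ℂ)‖ + ‖2 / Complex.cosh (γC w * s) ^ 2‖ :=
        norm_sub_le _ _
    _ = 1 + 2 / ‖Complex.cosh (γC w * s)‖ ^ 2 := by simp
    _ ≤ 1 + 2 / Real.cos 1 ^ 2 := by gcongr

lemma re_cosKinkC_ofReal {v : ℝ} (hv : |v| < 1) (s : ℝ) :
    (cosKinkC s v).re = Real.cos (θK (γ v * s)) := by
  rw [cos_θK, cosKinkC, γC_ofReal hv, ← Complex.ofReal_mul, ← Complex.ofReal_cosh]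
  norm_cast

lemma iteratedDeriv_re_comp_ofReal {E : ℂ → ℂ} {U : Set ℂ} (hU : IsOpen U)
    (hE : DifferentiableOn ℂ E U) (n : ℕ) {v : ℝ} (hv : (v : ℂ) ∈ U) :
    iteratedDeriv n (fun x : ℝ => (E x).re) v = (iteratedDeriv n E v).re := by
  induction n generalizing v with
  | zero => simp
  | succ n ih =>
    have hEn : DifferentiableAt ℂ (iteratedDeriv n E) v := by
      rw [iteratedDeriv_eq_iterate]
      exact ((hE.analyticOnNhd hU).iterated_deriv n v hv).differentiableAt
    have hnhds : (fun x : ℝ => (x : ℂ)) ⁻¹' U ∈ 𝓝 v :=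
      (hU.preimage Complex.continuous_ofReal).mem_nhds hv
    have heq : iteratedDeriv n (fun x : ℝ => (E x).re) =ᶠ[𝓝 v]
        fun x : ℝ => (iteratedDeriv n E x).re :=
      Filter.eventually_of_mem hnhds fun x hx => ih hx
    rw [iteratedDeriv_succ, heq.deriv_eq, hEn.hasDerivAt.real_of_complex.deriv,
      ← iteratedDeriv_succ]

lemma Nat.factorial_le_factorial_sub_three_mul {n : ℕ} (hn : 3 ≤ n) :
    n ! ≤ (n - 3)! * 8 ^ n := by
  rw [← Nat.factorial_mul_descFactorial hn]
  gcongr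
  calc n.descFactorial 3 ≤ n ^ 3 := Nat.descFactorial_le_pow n 3
    _ ≤ (2 ^ n) ^ 3 := Nat.pow_le_pow_left Nat.lt_two_pow_self.le 3
    _ = 8 ^ n := by rw [← pow_mul, mul_comm, pow_mul]; norm_num

lemma abs_iteratedDeriv_cos_θK_le {u r : ℝ} (hr : 0 < r) (hur : |u| + r < 1) (s : ℝ)
    (m : ℕ) :
    |iteratedDeriv m (fun v => Real.cos (θK (γ v * s))) u|
      ≤ m ! * (1 + 2 / Real.cos 1 ^ 2) / r ^ m := by
  have hball : Metric.closedBall (u : ℂ) r ⊆ γRegion := fun w hw => by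
    refine mem_γRegion_of_abs_re_lt_one ?_
    have hwu : |(w - u).re| ≤ r :=
      (Complex.abs_re_le_norm _).trans (mem_closedBall_iff_norm.mp hw)
    rw [Complex.sub_re, Complex.ofReal_re] at hwu
    linarith [abs_sub_abs_le_abs_sub w.re u]
  have hreal : (fun v => Real.cos (θK (γ v * s))) =ᶠ[𝓝 u] fun v => (cosKinkC s v).re :=
    Filter.eventually_of_mem ((isOpen_lt continuous_abs continuous_const).mem_nhds
      (show |u| < 1 by linarith)) fun v hv => (re_cosKinkC_ofReal hv s).symm
  calc |iteratedDeriv m (fun v => Real.cos (θK (γ v * s))) u|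
      = |(iteratedDeriv m (cosKinkC s) u).re| := by
        rw [hreal.iteratedDeriv_eq, iteratedDeriv_re_comp_ofReal isOpen_γRegion
          (differentiableOn_cosKinkC s) m (hball (Metric.mem_closedBall_self hr.le))]
    _ ≤ ‖iteratedDeriv m (cosKinkC s) u‖ := Complex.abs_re_le_norm _
    _ ≤ m ! * (1 + 2 / Real.cos 1 ^ 2) / r ^ m :=
        Complex.norm_iteratedDeriv_le_of_forall_mem_sphere_norm_le m hr
          ((differentiableOn_cosKinkC s).diffContOnCl_ball hball) fun w hw =>
            norm_cosKinkC_le (hball (Metric.sphere_subset_closedBall hw)) s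

theorem cos_kink_u_derivatives_bound_general (ustar : ℝ) (h1 : ustar < 1) :
    ∃ C : ℝ, 0 < C ∧ ∀ m : ℕ, 3 ≤ m → ∀ u : ℝ, |u| ≤ ustar → ∀ ξ x : ℝ,
      |iteratedDeriv m (fun u' => Real.cos (θK (γ u' * (x - ξ)))) u|
        ≤ (m - 3).factorial * C ^ (2 * m - 3) := by
  set M := 1 + 2 / Real.cos 1 ^ 2
  have hM : 1 ≤ M := le_add_of_nonneg_right (by positivity)
  obtain ⟨r, hr, hur⟩ : ∃ r, 0 < r ∧ ustar + r < 1 :=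
    ⟨(1 - ustar) / 2, by linarith, by linarith⟩
  refine ⟨max 1 (8 * M / r), one_pos.trans_le (le_max_left _ _), fun m hm u hu ξ x => ?_⟩
  calc |iteratedDeriv m (fun u' => Real.cos (θK (γ u' * (x - ξ)))) u|
      ≤ m ! * M / r ^ m := abs_iteratedDeriv_cos_θK_le hr (by linarith) _ m
    _ ≤ ((m - 3)! * 8 ^ m : ℕ) * M ^ m / r ^ m := by
        gcongr
        · exact_mod_cast Nat.factorial_le_factorial_sub_three_mul hm
        · exact le_self_pow₀ hM (by omega)
    _ = (m - 3)! * (8 * M / r) ^ m := by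
        rw [div_pow, mul_pow]
        push_cast
        ring
    _ ≤ (m - 3)! * max 1 (8 * M / r) ^ m := by gcongr; exact le_max_right _ _
    _ ≤ (m - 3)! * max 1 (8 * M / r) ^ (2 * m - 3) := by
        gcongr
        · exact le_max_left _ _
        · omega

/-- For every `u* ∈ (0,1)` there is a constant `C > 0` such that for every
`m ≥ 3`, all `|u| ≤ u*` and all `ξ, x ∈ ℝ`,
`|∂_u^m [cos(θ_K(γ(u)(x−ξ)))]| ≤ (m−3)!·C^{2m−3}`. -/
theorem cos_kink_u_derivatives_bound (ustar : ℝ) (h0 : 0 < ustar) (h1 : ustar < 1) :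
    ∃ C : ℝ, 0 < C ∧ ∀ m : ℕ, 3 ≤ m → ∀ u : ℝ, |u| ≤ ustar → ∀ ξ x : ℝ,
      |iteratedDeriv m (fun u' => Real.cos (θK (γ u' * (x - ξ)))) u|
        ≤ (m - 3).factorial * C ^ (2 * m - 3) :=
  cos_kink_u_derivatives_bound_general ustar h1
end
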